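/- arXiv:1508.01263 — 3 statements merged into one kernel-verified Lean document; each statement's English description precedes it below -/
import Mathlib

section
/- Let k and ℓ be positive integers with k ≤ p ≤ ℓ−1 and ℓ ≤ q, where p and q are positive integers. Then m(p,q,k,ℓ) ≥ (ℓ−1)(p−k+1) + q(k−1). -/
/-- An ordered bipartite graph with parts of sizes `p`, `q` (encoded by its edge
relation `E : Fin p → Fin q → Prop`) maps onto `K_{k,l}` (with the first part going
to the part of size `k`): there are monotone surjections of the parts such that every
pair of classes is joined by an edge. -/
def IntervalMinorAux (p q k l : ℕ) (E : Fin p → Fin q → Prop) : Prop :=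
  ∃ f : Fin p → Fin k, ∃ g : Fin q → Fin l,
    Monotone f ∧ Monotone g ∧ Function.Surjective f ∧ Function.Surjective g ∧
    ∀ a : Fin k, ∀ b : Fin l, ∃ i : Fin p, ∃ j : Fin q, f i = a ∧ g j = b ∧ E i j

/-- `G` contains `K_{k,l}` as an interval minor (either orientation of the parts). -/
def ContainsIntervalMinor (p q k l : ℕ) (E : Fin p → Fin q → Prop) : Prop :=
  IntervalMinorAux p q k l E ∨ IntervalMinorAux p q l k E

/-- `G` is `K_{k,l}`-interval minor free. -/
def IntervalMinorFree (p q k l : ℕ) (E : Fin p → Fin q → Prop) : Prop :=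
  ¬ ContainsIntervalMinor p q k l E

/-- The number of edges of an ordered bipartite graph. -/
noncomputable def edgeCount (p q : ℕ) (E : Fin p → Fin q → Prop) : ℕ :=
  Set.ncard {x : Fin p × Fin q | E x.1 x.2}

/-- The set of edge counts achieved by `K_{k,l}`-interval minor free ordered bipartite
graphs with parts of sizes `p` and `q`; its greatest element is `m(p,q,k,l)`. -/
def extremalSet (p q k l : ℕ) : Set ℕ :=
  {N | ∃ E : Fin p → Fin q → Prop, IntervalMinorFree p q k l E ∧ edgeCount p q E = N}


lemma mono_surj_le {n m : ℕ} {f : Fin n → Fin m} (hf : Monotone f)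
    (hs : Function.Surjective f) : ∀ c : ℕ, ∀ i : Fin n, (f i).val = c → c ≤ i.val := by
  intro c
  induction c using Nat.strong_induction_on with
  | _ c ih =>
    intro i hi
    rcases Nat.eq_zero_or_pos c with h0 | hpos
    · omega
    · have hc : c - 1 < m := by have := (f i).isLt; omega
      obtain ⟨j, hj⟩ := hs ⟨c - 1, hc⟩
      have hji : j < i := by
        by_contra h
        push_neg at h
        have h2 := hf h
        rw [hj] at h2
        have : c ≤ c - 1 := by simpa [Fin.le_def, hi] using h2
        omega
      have h3 := ih (c-1) (by omega) j (by rw [hj])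
      have h4 : j.val < i.val := hji
      omega

theorem stmt7 (p q k l : ℕ) (hk : 0 < k) (hl : 0 < l) (hp : 0 < p) (hq : 0 < q)
    (hkp : k ≤ p) (hpl : p ≤ l - 1) (hlq : l ≤ q) :
    ∃ N ∈ extremalSet p q k l, (l - 1) * (p - k + 1) + q * (k - 1) ≤ N := by

  classical
  set E : Fin p → Fin q → Prop := fun i j => i.val < k - 1 ∨ j.val < l - 1 with hE
  refine ⟨edgeCount p q E, ⟨E, ?_, rfl⟩, ?_⟩
  · intro hcon
    rcases hcon with ⟨f,g,hf,hg,hfs,hgs,hall⟩ | ⟨f,g,_,_,hfs,_,_⟩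
    · obtain ⟨i,j,hfi,hgj,hEij⟩ := hall ⟨k-1, by omega⟩ ⟨l-1, by omega⟩
      have h1 : k-1 ≤ i.val := mono_surj_le hf hfs (k-1) i (by rw [hfi])
      have h2 : l-1 ≤ j.val := mono_surj_le hg hgs (l-1) j (by rw [hgj])
      rcases hEij with h | h <;> omega
    · have hcard := Fintype.card_le_of_surjective f hfs
      simp only [Fintype.card_fin] at hcard
      omega
  · have hset : {x : Fin p × Fin q | E x.1 x.2} =
        ↑(((Finset.univ.filter fun i : Fin p => i.val < k-1) ×ˢ Finset.univ) ∪
          ((Finset.univ.filter fun i : Fin p => ¬ i.val < k-1) ×ˢ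
           (Finset.univ.filter fun j : Fin q => j.val < l-1))) := by
      ext x
      simp only [Set.mem_setOf_eq, Finset.coe_union, Set.mem_union, Finset.coe_filter,
        Finset.mem_coe, Finset.mem_product, Finset.mem_filter, Finset.mem_univ, true_and, hE]
      tauto
    rw [edgeCount, hset, Set.ncard_coe_finset]
    rw [Finset.card_union_of_disjoint]
    · rw [Finset.card_product, Finset.card_product]
      have c1 : (Finset.univ.filter fun i : Fin p => i.val < k-1).card = k - 1 := by
        have : (Finset.univ.filter fun i : Fin p => i.val < k-1) =
            Finset.Iio (⟨k-1, by omega⟩ : Fin p) := by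
          ext i; simp [Fin.lt_def]
        rw [this, Fin.card_Iio]
      have c2 : (Finset.univ.filter fun i : Fin p => ¬ i.val < k-1).card = p - (k - 1) := by
        rw [Finset.filter_not, Finset.card_sdiff_of_subset (Finset.filter_subset _ _), c1]
        simp
      have c3 : (Finset.univ.filter fun j : Fin q => j.val < l-1).card = l - 1 := by
        have : (Finset.univ.filter fun j : Fin q => j.val < l-1) =
            Finset.Iio (⟨l-1, by omega⟩ : Fin q) := by
          ext j; simp [Fin.lt_def]
        rw [this, Fin.card_Iio]
      rw [c1, c2, c3, Finset.card_univ, Fintype.card_fin]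
      have h1 : p - (k-1) = p - k + 1 := by omega
      rw [h1]
      nlinarith [Nat.mul_comm (k-1) q, Nat.mul_comm (p-k+1) (l-1)]
    · rw [Finset.disjoint_left]
      intro x hx hx2
      simp only [Finset.mem_product, Finset.mem_filter, Finset.mem_univ, true_and] at hx hx2
      tauto
end

section
/- Let k ≥ 2 and ℓ ≥ 2 be integers. Let (G;A,B) and (G';A',B') be vertex-disjoint ordered bipartite graphs with |A| = p, |B| = q, |A'| = r, |B'| = t, all at least k−1, such that in G each of the k−1 largest vertices of A is adjacent to each of the k−1 largest vertices of B, and in G' each of the k−1 smallest vertices of A' is adjacent to each of the k−1 smallest vertices of B'. Let the concatenation G ⊕ G' be the ordered bipartite graph obtained from the disjoint union of G and G' by identifying, for each 1 ≤ i ≤ k−1, the i-th (in increasing order) of the k−1 largest vertices of A with the i-th of the k−1 smallest vertices of A', and the i-th of the k−1 largest vertices of B with the i-th of the k−1 smallest vertices of B', where in the resulting linear orders all vertices coming from G precede the remaining vertices coming from G'. If both G and G' are K_{k,ℓ}-interval minor free, then G ⊕ G' is K_{k,ℓ}-interval minor free. -/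
lemma squeeze {n k : ℕ} {f : Fin n → Fin k} (hf : Monotone f) {i1 i2 i : Fin n} {x : Fin k}
    (h1 : f i1 = x) (h2 : f i2 = x) (l1 : (i1 : ℕ) ≤ (i : ℕ)) (l2 : (i : ℕ) ≤ (i2 : ℕ)) :
    f i = x :=
  le_antisymm (h2 ▸ hf (Fin.le_def.mpr l2)) (h1 ▸ hf (Fin.le_def.mpr l1))

lemma aux_swap {p q k l : ℕ} {E : Fin p → Fin q → Prop} :
    IntervalMinorAux p q k l E → IntervalMinorAux q p l k (fun j i => E i j) := by
  rintro ⟨f, g, hf, hg, sf, sg, hc⟩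
  exact ⟨g, f, hg, hf, sg, sf, fun b a => by
    obtain ⟨i, j, h1, h2, h3⟩ := hc a b; exact ⟨j, i, h2, h1, h3⟩⟩

lemma aux_rev {p q k l : ℕ} {E : Fin p → Fin q → Prop} :
    IntervalMinorAux p q k l E → IntervalMinorAux p q k l (fun i j => E i.rev j.rev) := by
  rintro ⟨f, g, hf, hg, sf, sg, hc⟩
  refine ⟨fun i => (f i.rev).rev, fun j => (g j.rev).rev, ?_, ?_, ?_, ?_, ?_⟩
  · intro i j hij
    exact Fin.rev_le_rev.mpr (hf (Fin.rev_le_rev.mpr hij))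
  · intro i j hij
    exact Fin.rev_le_rev.mpr (hg (Fin.rev_le_rev.mpr hij))
  · intro a
    obtain ⟨i, hi⟩ := sf a.rev
    exact ⟨i.rev, by show (f i.rev.rev).rev = a; rw [Fin.rev_rev, hi, Fin.rev_rev]⟩
  · intro b
    obtain ⟨j, hj⟩ := sg b.rev
    exact ⟨j.rev, by show (g j.rev.rev).rev = b; rw [Fin.rev_rev, hj, Fin.rev_rev]⟩
  · intro a b
    obtain ⟨i, j, h1, h2, h3⟩ := hc a.rev b.rev
    refine ⟨i.rev, j.rev, ?_, ?_, ?_⟩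
    · show (f i.rev.rev).rev = a; rw [Fin.rev_rev, h1, Fin.rev_rev]
    · show (g j.rev.rev).rev = b; rw [Fin.rev_rev, h2, Fin.rev_rev]
    · show E i.rev.rev j.rev.rev; rw [Fin.rev_rev, Fin.rev_rev]; exact h3

lemma coreL (k l p q r s : ℕ) (hk : 2 ≤ k)
    (hp : k - 1 ≤ p) (hq : k - 1 ≤ q) (hr : k - 1 ≤ r) (hs : k - 1 ≤ s)
    (E : Fin p → Fin q → Prop) (E' : Fin r → Fin s → Prop)
    (htop : ∀ (i : Fin p) (j : Fin q),
      p - (k - 1) ≤ (i : ℕ) → q - (k - 1) ≤ (j : ℕ) → E i j)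
    (Ec : Fin (p + r - (k - 1)) → Fin (q + s - (k - 1)) → Prop)
    (hEc : ∀ (i : Fin (p + r - (k - 1))) (j : Fin (q + s - (k - 1))),
      Ec i j →
        ((∃ (i' : Fin p) (j' : Fin q), (i' : ℕ) = (i : ℕ) ∧ (j' : ℕ) = (j : ℕ) ∧ E i' j') ∨
         (∃ (i' : Fin r) (j' : Fin s), (i : ℕ) = (p - (k - 1)) + (i' : ℕ) ∧
            (j : ℕ) = (q - (k - 1)) + (j' : ℕ) ∧ E' i' j')))
    (f : Fin (p + r - (k - 1)) → Fin k) (g : Fin (q + s - (k - 1)) → Fin l)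
    (hf : Monotone f) (hg : Monotone g)
    (hfs : Function.Surjective f) (hgs : Function.Surjective g)
    (hcov : ∀ a b, ∃ i j, f i = a ∧ g j = b ∧ Ec i j)
    (a0 : Fin k) (hfib : ∀ i, f i = a0 → (i : ℕ) < p - (k - 1)) :
    IntervalMinorAux p q k l E := by
  obtain ⟨ia, hia⟩ := hfs a0
  have hia' : (ia : ℕ) < p - (k - 1) := hfib ia hia
  have hpk : k ≤ p := by omega
  -- every column class is attained below q
  have hyG : ∀ y : Fin l, ∃ jq : Fin (q + s - (k - 1)), (jq : ℕ) < q ∧ g jq = y := by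
    intro y
    obtain ⟨i, j, hfi, hgj, he⟩ := hcov a0 y
    have hi := hfib i hfi
    rcases hEc i j he with ⟨i', j', hi', hj', hE⟩ | ⟨i', j', hi', hj', hE⟩
    · exact ⟨j, by have := j'.isLt; omega, hgj⟩
    · exact absurd hi' (by omega)
  -- attain y on the B-overlap, given a witness at or beyond the overlap
  have hyOv : ∀ (y : Fin l) (j : Fin (q + s - (k - 1))), g j = y → q - (k - 1) ≤ (j : ℕ) →
      ∃ jq : Fin (q + s - (k - 1)), (jq : ℕ) < q ∧ q - (k - 1) ≤ (jq : ℕ) ∧ g jq = y := by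
    intro y j hgj hjo
    by_cases hjq : (j : ℕ) < q
    · exact ⟨j, hjq, hjo, hgj⟩
    · obtain ⟨j1, hj1q, hgj1⟩ := hyG y
      by_cases h1 : q - (k - 1) ≤ (j1 : ℕ)
      · exact ⟨j1, hj1q, h1, hgj1⟩
      · have hqQ : q - 1 < q + s - (k - 1) := by have := j.isLt; omega
        refine ⟨⟨q - 1, hqQ⟩, by show q - 1 < q; omega, by show q - (k-1) ≤ q - 1; omega, ?_⟩
        exact squeeze hg hgj1 hgj (by show (j1 : ℕ) ≤ q - 1; omega) (by show q - 1 ≤ (j : ℕ); omega)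
  -- the restricted column map
  have hjlt : ∀ j : Fin q, (j : ℕ) < q + s - (k - 1) := by
    intro j; have := j.isLt; omega
  have hg'mono : Monotone (fun j : Fin q => g ⟨(j : ℕ), hjlt j⟩) := by
    intro a b hab
    exact hg (Fin.le_def.mpr (by exact hab))
  have hg'surj : Function.Surjective (fun j : Fin q => g ⟨(j : ℕ), hjlt j⟩) := by
    intro y
    obtain ⟨jq, hjq, hgjq⟩ := hyG y
    exact ⟨⟨(jq : ℕ), hjq⟩, (congrArg g (Fin.ext rfl)).trans hgjq⟩
  have hilt : ∀ i : Fin p, (i : ℕ) < p + r - (k - 1) := by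
    intro i; have := i.isLt; omega
  by_cases hcase : ∀ x : Fin k, ∃ i : Fin (p + r - (k - 1)), (i : ℕ) < p ∧ f i = x
  · -- case (i): every row class attained below p
    refine ⟨fun i => f ⟨(i : ℕ), hilt i⟩, fun j => g ⟨(j : ℕ), hjlt j⟩,
      ?_, hg'mono, ?_, hg'surj, ?_⟩
    · intro a b hab
      exact hf (Fin.le_def.mpr (by exact hab))
    · intro x
      obtain ⟨i1, hi1p, hfi1⟩ := hcase x
      exact ⟨⟨(i1 : ℕ), hi1p⟩, (congrArg f (Fin.ext rfl)).trans hfi1⟩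
    · intro x y
      obtain ⟨i, j, hfi, hgj, he⟩ := hcov x y
      rcases hEc i j he with ⟨i', j', hi', hj', hE⟩ | ⟨i', j', hi', hj', hE⟩
      · refine ⟨i', j', ?_, ?_, hE⟩
        · exact (congrArg f (Fin.ext hi')).trans hfi
        · exact (congrArg g (Fin.ext hj')).trans hgj
      · -- G'-side edge: route through the overlap
        have hio : p - (k - 1) ≤ (i : ℕ) := by have := i'.isLt; omega
        have hx2 : ∃ iq : Fin (p + r - (k - 1)), (iq : ℕ) < p ∧ p - (k - 1) ≤ (iq : ℕ) ∧ f iq = x := by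
          by_cases hip : (i : ℕ) < p
          · exact ⟨i, hip, hio, hfi⟩
          · obtain ⟨i1, hi1p, hfi1⟩ := hcase x
            by_cases h1 : p - (k - 1) ≤ (i1 : ℕ)
            · exact ⟨i1, hi1p, h1, hfi1⟩
            · have hpP : p - 1 < p + r - (k - 1) := by have := i.isLt; omega
              refine ⟨⟨p - 1, hpP⟩, by show p - 1 < p; omega, by show p - (k-1) ≤ p - 1; omega, ?_⟩
              exact squeeze hf hfi1 hfi (by show (i1 : ℕ) ≤ p - 1; omega) (by show p - 1 ≤ (i : ℕ); omega)
        obtain ⟨iq, hiq1, hiq2, hiq3⟩ := hx2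
        obtain ⟨jq, hjq1, hjq2, hjq3⟩ := hyOv y j hgj (by omega)
        refine ⟨⟨(iq : ℕ), hiq1⟩, ⟨(jq : ℕ), hjq1⟩, ?_, ?_, ?_⟩
        · exact (congrArg f (Fin.ext rfl)).trans hiq3
        · exact (congrArg g (Fin.ext rfl)).trans hjq3
        · exact htop _ _ (by show p - (k-1) ≤ (iq : ℕ); omega) (by show q - (k-1) ≤ (jq : ℕ); omega)
  · -- case (ii): some row class only attained at ≥ p
    push_neg at hcase
    obtain ⟨x0, hx0⟩ := hcase
    have hx0' : ∀ i, f i = x0 → p ≤ (i : ℕ) := by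
      intro i hi
      by_contra h
      exact (hx0 i (by omega)) hi
    obtain ⟨ix, hix⟩ := hfs x0
    have hixp : p ≤ (ix : ℕ) := hx0' ix hix
    have ha0x0 : (a0 : ℕ) < (x0 : ℕ) := by
      have hle : a0 ≤ x0 := by
        rw [← hia, ← hix]
        exact hf (Fin.le_def.mpr (by omega))
      have hne : a0 ≠ x0 := by
        intro h
        exact absurd (hx0' ia (h ▸ hia)) (by omega)
      exact lt_of_le_of_ne (by exact_mod_cast hle) (fun h => hne (Fin.ext h))
    have hA : (a0 : ℕ) + 2 ≤ k := by have := x0.isLt; omega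
    -- every column class attained on the B-overlap
    have hyA : ∀ y : Fin l, ∃ jq : Fin (q + s - (k - 1)),
        (jq : ℕ) < q ∧ q - (k - 1) ≤ (jq : ℕ) ∧ g jq = y := by
      intro y
      obtain ⟨i, j, hfi, hgj, he⟩ := hcov x0 y
      have hip := hx0' i hfi
      rcases hEc i j he with ⟨i', j', hi', hj', hE⟩ | ⟨i', j', hi', hj', hE⟩
      · exact absurd hi' (by have := i'.isLt; omega)
      · exact hyOv y j hgj (by omega)
    -- the modified row map
    have hcbound : ∀ x : Fin p, ¬ ((x : ℕ) < p - (k - 1 - (a0 : ℕ))) →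
        (a0 : ℕ) + 1 + ((x : ℕ) - (p - (k - 1 - (a0 : ℕ)))) < k := by
      intro x hx; have := x.isLt; omega
    refine ⟨fun i => if h : (i : ℕ) < p - (k - 1 - (a0 : ℕ)) then min (f ⟨(i : ℕ), hilt i⟩) a0
      else ⟨(a0 : ℕ) + 1 + ((i : ℕ) - (p - (k - 1 - (a0 : ℕ)))), hcbound i h⟩,
      fun j => g ⟨(j : ℕ), hjlt j⟩, ?_, hg'mono, ?_, hg'surj, ?_⟩
    · -- monotone
      intro a b hab
      have hab' : (a : ℕ) ≤ (b : ℕ) := hab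
      dsimp only
      split_ifs with h1 h2 h2
      · exact min_le_min (hf (Fin.le_def.mpr (by exact hab'))) le_rfl
      · have hle : (min (f ⟨(a : ℕ), hilt a⟩) a0) ≤ a0 := min_le_right _ _
        have hlev : ((min (f ⟨(a : ℕ), hilt a⟩) a0 : Fin k) : ℕ) ≤ (a0 : ℕ) := hle
        exact Fin.le_def.mpr (by show _ ≤ (a0 : ℕ) + 1 + _; omega)
      · omega
      · exact Fin.le_def.mpr (by show (a0:ℕ) + 1 + _ ≤ (a0:ℕ) + 1 + _; omega)
    · -- surjective
      intro x
      rcases lt_trichotomy x a0 with hlt | heq | hgt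
      · obtain ⟨i1, hi1⟩ := hfs x
        have hord : (i1 : ℕ) < (ia : ℕ) := by
          by_contra h
          have h2 : a0 ≤ f i1 := by rw [← hia]; exact hf (Fin.le_def.mpr (by omega))
          rw [hi1] at h2
          exact absurd hlt (not_lt.mpr h2)
        have hi1p : (i1 : ℕ) < p := by omega
        refine ⟨⟨(i1 : ℕ), hi1p⟩, ?_⟩
        dsimp only
        rw [dif_pos (by show (i1 : ℕ) < _; omega)]
        rw [(congrArg f (Fin.ext rfl)).trans hi1]
        exact min_eq_left hlt.le
      · refine ⟨⟨(ia : ℕ), by omega⟩, ?_⟩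
        dsimp only
        rw [dif_pos (by show (ia : ℕ) < _; omega)]
        rw [(congrArg f (Fin.ext rfl)).trans hia, heq, min_self]
      · have hxv : (a0 : ℕ) + 1 ≤ (x : ℕ) := hgt
        have hidx : p - (k - 1 - (a0 : ℕ)) + ((x : ℕ) - (a0 : ℕ) - 1) < p := by
          have := x.isLt; omega
        refine ⟨⟨p - (k - 1 - (a0 : ℕ)) + ((x : ℕ) - (a0 : ℕ) - 1), hidx⟩, ?_⟩
        dsimp only
        rw [dif_neg (by show ¬ (_ + _ < _); omega)]
        exact Fin.ext (by show (a0 : ℕ) + 1 + _ = (x : ℕ); omega)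
    · -- covering
      intro x y
      rcases le_or_gt x a0 with hxle | hxgt
      · obtain ⟨i, j, hfi, hgj, he⟩ := hcov x y
        have hilt' : (i : ℕ) < p - (k - 1) := by
          by_contra h
          have h2 : a0 ≤ f i := by
            rw [← hia]; exact hf (Fin.le_def.mpr (by omega))
          rw [hfi] at h2
          have hxa : x = a0 := le_antisymm hxle h2
          exact absurd (hfib i (hxa ▸ hfi)) h
        rcases hEc i j he with ⟨i', j', hi', hj', hE⟩ | ⟨i', j', hi', hj', hE⟩
        · refine ⟨i', j', ?_, (congrArg g (Fin.ext hj')).trans hgj, hE⟩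
          dsimp only
          rw [dif_pos (by show (i' : ℕ) < _; omega)]
          rw [(congrArg f (Fin.ext hi')).trans hfi]
          exact min_eq_left hxle
        · exact absurd hi' (by omega)
      · obtain ⟨jq, hjq1, hjq2, hjq3⟩ := hyA y
        have hxv : (a0 : ℕ) + 1 ≤ (x : ℕ) := hxgt
        have hidx : p - (k - 1 - (a0 : ℕ)) + ((x : ℕ) - (a0 : ℕ) - 1) < p := by
          have := x.isLt; omega
        refine ⟨⟨p - (k - 1 - (a0 : ℕ)) + ((x : ℕ) - (a0 : ℕ) - 1), hidx⟩, ⟨(jq : ℕ), hjq1⟩,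
          ?_, ?_, ?_⟩
        · dsimp only
          rw [dif_neg (by show ¬ (_ + _ < _); omega)]
          exact Fin.ext (by show (a0 : ℕ) + 1 + _ = (x : ℕ); omega)
        · exact (congrArg g (Fin.ext rfl)).trans hjq3
        · exact htop _ _ (by show p - (k-1) ≤ _ + _; omega) (by show q - (k-1) ≤ (jq : ℕ); omega)

lemma coreR (k l p q r s : ℕ) (hk : 2 ≤ k)
    (hp : k - 1 ≤ p) (hq : k - 1 ≤ q) (hr : k - 1 ≤ r) (hs : k - 1 ≤ s)
    (E : Fin p → Fin q → Prop) (E' : Fin r → Fin s → Prop)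
    (hbot : ∀ (i : Fin r) (j : Fin s), (i : ℕ) < k - 1 → (j : ℕ) < k - 1 → E' i j)
    (Ec : Fin (p + r - (k - 1)) → Fin (q + s - (k - 1)) → Prop)
    (hEc : ∀ (i : Fin (p + r - (k - 1))) (j : Fin (q + s - (k - 1))),
      Ec i j →
        ((∃ (i' : Fin p) (j' : Fin q), (i' : ℕ) = (i : ℕ) ∧ (j' : ℕ) = (j : ℕ) ∧ E i' j') ∨
         (∃ (i' : Fin r) (j' : Fin s), (i : ℕ) = (p - (k - 1)) + (i' : ℕ) ∧
            (j : ℕ) = (q - (k - 1)) + (j' : ℕ) ∧ E' i' j')))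
    (f : Fin (p + r - (k - 1)) → Fin k) (g : Fin (q + s - (k - 1)) → Fin l)
    (hf : Monotone f) (hg : Monotone g)
    (hfs : Function.Surjective f) (hgs : Function.Surjective g)
    (hcov : ∀ a b, ∃ i j, f i = a ∧ g j = b ∧ Ec i j)
    (a0 : Fin k) (hfib : ∀ i, f i = a0 → p ≤ (i : ℕ)) :
    IntervalMinorAux r s k l E' := by
  have hn : r + p - (k - 1) = p + r - (k - 1) := by omega
  have hm : s + q - (k - 1) = q + s - (k - 1) := by omega
  have key : IntervalMinorAux r s k l (fun i j => E' i.rev j.rev) := by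
    refine coreL k l r s p q hk hr hs hp hq
      (fun i j => E' i.rev j.rev) (fun i j => E i.rev j.rev)
      ?_
      (fun i j => Ec (Fin.cast hn i).rev (Fin.cast hm j).rev)
      ?_
      (fun i => (f (Fin.cast hn i).rev).rev) (fun j => (g (Fin.cast hm j).rev).rev)
      ?_ ?_ ?_ ?_ ?_ a0.rev ?_
    · -- htop for the reversed instance
      intro i j h1 h2
      apply hbot
      · rw [Fin.val_rev]; have := i.isLt; omega
      · rw [Fin.val_rev]; have := j.isLt; omega
    · -- hEc for the reversed instance
      intro i j h
      rcases hEc _ _ h with ⟨a, b, h1, h2, h3⟩ | ⟨a, b, h1, h2, h3⟩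
      · rw [Fin.val_rev, Fin.coe_cast] at h1
        rw [Fin.val_rev, Fin.coe_cast] at h2
        refine Or.inr ⟨a.rev, b.rev, ?_, ?_, ?_⟩
        · rw [Fin.val_rev]; have := i.isLt; have := a.isLt; omega
        · rw [Fin.val_rev]; have := j.isLt; have := b.isLt; omega
        · show E a.rev.rev b.rev.rev
          rw [Fin.rev_rev, Fin.rev_rev]; exact h3
      · rw [Fin.val_rev, Fin.coe_cast] at h1
        rw [Fin.val_rev, Fin.coe_cast] at h2
        refine Or.inl ⟨a.rev, b.rev, ?_, ?_, ?_⟩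
        · rw [Fin.val_rev]; have := i.isLt; have := a.isLt; omega
        · rw [Fin.val_rev]; have := j.isLt; have := b.isLt; omega
        · show E' a.rev.rev b.rev.rev
          rw [Fin.rev_rev, Fin.rev_rev]; exact h3
      -- note: omega uses i.isLt via the rewritten h1
    · -- monotone f-hat
      intro a b hab
      refine Fin.rev_le_rev.mpr (hf (Fin.rev_le_rev.mpr ?_))
      exact Fin.le_def.mpr (by simpa using (hab : (a : ℕ) ≤ (b : ℕ)))
    · -- monotone g-hat
      intro a b hab
      refine Fin.rev_le_rev.mpr (hg (Fin.rev_le_rev.mpr ?_))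
      exact Fin.le_def.mpr (by simpa using (hab : (a : ℕ) ≤ (b : ℕ)))
    · -- surjective f-hat
      intro x
      obtain ⟨i0, hi0⟩ := hfs x.rev
      refine ⟨Fin.cast hn.symm i0.rev, ?_⟩
      have hcc : (Fin.cast hn (Fin.cast hn.symm i0.rev)).rev = i0 := by
        apply Fin.ext
        rw [Fin.val_rev, Fin.coe_cast, Fin.coe_cast, Fin.val_rev]
        have := i0.isLt; omega
      show (f (Fin.cast hn (Fin.cast hn.symm i0.rev)).rev).rev = x
      rw [hcc, hi0, Fin.rev_rev]
    · -- surjective g-hat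
      intro y
      obtain ⟨j0, hj0⟩ := hgs y.rev
      refine ⟨Fin.cast hm.symm j0.rev, ?_⟩
      have hcc : (Fin.cast hm (Fin.cast hm.symm j0.rev)).rev = j0 := by
        apply Fin.ext
        rw [Fin.val_rev, Fin.coe_cast, Fin.coe_cast, Fin.val_rev]
        have := j0.isLt; omega
      show (g (Fin.cast hm (Fin.cast hm.symm j0.rev)).rev).rev = y
      rw [hcc, hj0, Fin.rev_rev]
    · -- covering
      intro a b
      obtain ⟨i, j, h1, h2, h3⟩ := hcov a.rev b.rev
      have hcc : (Fin.cast hn (Fin.cast hn.symm i.rev)).rev = i := by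
        apply Fin.ext
        rw [Fin.val_rev, Fin.coe_cast, Fin.coe_cast, Fin.val_rev]
        have := i.isLt; omega
      have hdd : (Fin.cast hm (Fin.cast hm.symm j.rev)).rev = j := by
        apply Fin.ext
        rw [Fin.val_rev, Fin.coe_cast, Fin.coe_cast, Fin.val_rev]
        have := j.isLt; omega
      refine ⟨Fin.cast hn.symm i.rev, Fin.cast hm.symm j.rev, ?_, ?_, ?_⟩
      · show (f (Fin.cast hn (Fin.cast hn.symm i.rev)).rev).rev = a
        rw [hcc, h1, Fin.rev_rev]
      · show (g (Fin.cast hm (Fin.cast hm.symm j.rev)).rev).rev = b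
        rw [hdd, h2, Fin.rev_rev]
      · show Ec (Fin.cast hn (Fin.cast hn.symm i.rev)).rev (Fin.cast hm (Fin.cast hm.symm j.rev)).rev
        rw [hcc, hdd]; exact h3
    · -- the fiber condition
      intro i hi
      have hfi : f (Fin.cast hn i).rev = a0 := Fin.rev_injective hi
      have hge := hfib _ hfi
      rw [Fin.val_rev, Fin.coe_cast] at hge
      have := i.isLt
      omega
  have h2 := aux_rev key
  simp only [Fin.rev_rev] at h2
  exact h2

lemma core (k l p q r s : ℕ) (hk : 2 ≤ k)
    (hp : k - 1 ≤ p) (hq : k - 1 ≤ q) (hr : k - 1 ≤ r) (hs : k - 1 ≤ s)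
    (E : Fin p → Fin q → Prop) (E' : Fin r → Fin s → Prop)
    (htop : ∀ (i : Fin p) (j : Fin q),
      p - (k - 1) ≤ (i : ℕ) → q - (k - 1) ≤ (j : ℕ) → E i j)
    (hbot : ∀ (i : Fin r) (j : Fin s), (i : ℕ) < k - 1 → (j : ℕ) < k - 1 → E' i j)
    (Ec : Fin (p + r - (k - 1)) → Fin (q + s - (k - 1)) → Prop)
    (hEc : ∀ (i : Fin (p + r - (k - 1))) (j : Fin (q + s - (k - 1))),
      Ec i j →
        ((∃ (i' : Fin p) (j' : Fin q), (i' : ℕ) = (i : ℕ) ∧ (j' : ℕ) = (j : ℕ) ∧ E i' j') ∨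
         (∃ (i' : Fin r) (j' : Fin s), (i : ℕ) = (p - (k - 1)) + (i' : ℕ) ∧
            (j : ℕ) = (q - (k - 1)) + (j' : ℕ) ∧ E' i' j')))
    (h : IntervalMinorAux (p + r - (k - 1)) (q + s - (k - 1)) k l Ec) :
    IntervalMinorAux p q k l E ∨ IntervalMinorAux r s k l E' := by
  obtain ⟨f, g, hf, hg, hfs, hgs, hcov⟩ := h
  -- pigeonhole: some row class avoids the overlap
  have hpig : ∃ a0 : Fin k, ∀ i, f i = a0 → ¬ (p - (k - 1) ≤ (i : ℕ) ∧ (i : ℕ) < p) := by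
    by_contra hcon
    push_neg at hcon
    choose c hc1 hc2 hc3 using hcon
    have hinj : Function.Injective fun a : Fin k => (⟨(c a : ℕ) - (p - (k - 1)), by
        have h2 := hc2 a; have h3 := hc3 a; omega⟩ : Fin (k - 1)) := by
      intro a a' hval
      have : ((c a : ℕ) - (p - (k - 1))) = ((c a' : ℕ) - (p - (k - 1))) := congrArg Fin.val hval
      have hcc : (c a : ℕ) = (c a' : ℕ) := by
        have h2 := hc2 a; have h2' := hc2 a'; omega
      rw [← hc1 a, ← hc1 a']
      exact congrArg f (Fin.ext hcc)
    have := Fintype.card_le_of_injective _ hinj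
    simp at this
    omega
  obtain ⟨a0, ha0⟩ := hpig
  have hdich : (∀ i, f i = a0 → (i : ℕ) < p - (k - 1)) ∨ (∀ i, f i = a0 → p ≤ (i : ℕ)) := by
    by_contra hcon
    push_neg at hcon
    obtain ⟨⟨i1, hfi1, hi1⟩, ⟨i2, hfi2, hi2⟩⟩ := hcon
    have hi1' : p ≤ (i1 : ℕ) := by
      have := ha0 i1 hfi1; omega
    have hi2' : (i2 : ℕ) < p - (k - 1) := by
      have := ha0 i2 hfi2; omega
    have hpP : p - 1 < p + r - (k - 1) := by have := i1.isLt; omega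
    have hsq : f ⟨p - 1, hpP⟩ = a0 :=
      squeeze hf hfi2 hfi1 (by show (i2 : ℕ) ≤ p - 1; omega) (by show p - 1 ≤ (i1 : ℕ); omega)
    have := ha0 _ hsq
    simp at this
    omega
  rcases hdich with hfib | hfib
  · exact Or.inl (coreL k l p q r s hk hp hq hr hs E E' htop Ec hEc f g hf hg hfs hgs hcov a0 hfib)
  · exact Or.inr (coreR k l p q r s hk hp hq hr hs E E' hbot Ec hEc f g hf hg hfs hgs hcov a0 hfib)

/-- Concatenation `G ⊕ G'`: `G` has parts of sizes `p, q`; `G'` has parts of sizes `r, s`;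
the `k-1` largest vertices of each part of `G` are identified (in order) with the `k-1`
smallest vertices of the corresponding part of `G'`, all vertices coming from `G`
preceding the remaining vertices coming from `G'`.  The hypothesis `hEc` characterizes
the edge relation of the concatenation. -/
theorem stmt8 (k l p q r s : ℕ) (hk : 2 ≤ k) (hl : 2 ≤ l)
    (hp : k - 1 ≤ p) (hq : k - 1 ≤ q) (hr : k - 1 ≤ r) (hs : k - 1 ≤ s)
    (E : Fin p → Fin q → Prop) (E' : Fin r → Fin s → Prop)
    (htop : ∀ (i : Fin p) (j : Fin q),
      p - (k - 1) ≤ (i : ℕ) → q - (k - 1) ≤ (j : ℕ) → E i j)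
    (hbot : ∀ (i : Fin r) (j : Fin s), (i : ℕ) < k - 1 → (j : ℕ) < k - 1 → E' i j)
    (Ec : Fin (p + r - (k - 1)) → Fin (q + s - (k - 1)) → Prop)
    (hEc : ∀ (i : Fin (p + r - (k - 1))) (j : Fin (q + s - (k - 1))),
      Ec i j ↔
        ((∃ (i' : Fin p) (j' : Fin q), (i' : ℕ) = (i : ℕ) ∧ (j' : ℕ) = (j : ℕ) ∧ E i' j') ∨
         (∃ (i' : Fin r) (j' : Fin s), (i : ℕ) = (p - (k - 1)) + (i' : ℕ) ∧
            (j : ℕ) = (q - (k - 1)) + (j' : ℕ) ∧ E' i' j')))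
    (hfree : IntervalMinorFree p q k l E)
    (hfree' : IntervalMinorFree r s k l E') :
    IntervalMinorFree (p + r - (k - 1)) (q + s - (k - 1)) k l Ec := by
  intro hcon
  rcases hcon with h | h
  · rcases core k l p q r s hk hp hq hr hs E E' htop hbot Ec (fun i j => (hEc i j).1) h with h1 | h1
    · exact hfree (Or.inl h1)
    · exact hfree' (Or.inl h1)
  · -- transposed orientation
    have ht := aux_swap h
    have hEcT : ∀ (j : Fin (q + s - (k - 1))) (i : Fin (p + r - (k - 1))),
        Ec i j →
          ((∃ (j' : Fin q) (i' : Fin p), (j' : ℕ) = (j : ℕ) ∧ (i' : ℕ) = (i : ℕ) ∧ E i' j') ∨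
           (∃ (j' : Fin s) (i' : Fin r), (j : ℕ) = (q - (k - 1)) + (j' : ℕ) ∧
              (i : ℕ) = (p - (k - 1)) + (i' : ℕ) ∧ E' i' j')) := by
      intro j i hij
      rcases (hEc i j).1 hij with ⟨i', j', h1, h2, h3⟩ | ⟨i', j', h1, h2, h3⟩
      · exact Or.inl ⟨j', i', h2, h1, h3⟩
      · exact Or.inr ⟨j', i', h2, h1, h3⟩
    rcases core k l q p s r hk hq hp hs hr (fun j i => E i j) (fun j i => E' i j)
      (fun j i hj hi => htop i j hi hj) (fun j i hj hi => hbot i j hi hj)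
      (fun j i => Ec i j) hEcT ht with h1 | h1
    · exact hfree (Or.inr (by
        have := aux_swap h1
        exact this))
    · exact hfree' (Or.inr (by
        have := aux_swap h1
        exact this))
end

section
/- Let t ≥ 2 and let n_1 < n_2 < ... < n_t and ℓ_1 < ℓ_2 < ... < ℓ_t be positive integers with ℓ_i ≤ n_i for all 1 ≤ i ≤ t and n_i < ℓ_{i+1} for all 1 ≤ i ≤ t−1. Then m(n_1,...,n_t, ℓ_1,...,ℓ_t) ≥ (∑_{1≤i<j≤t} n_i n_j) − n_1 n_2 + (ℓ_1−1)n_2 + (n_1−ℓ_1+1)(ℓ_2−1). -/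
/-- An ordered `t`-partite graph with parts of sizes `n 0, …, n (t-1)` (encoded by a
symmetric family of edge relations between its parts) contains the complete multipartite
graph `K_{l 0, …, l (t-1)}` as an interval minor: there are a permutation `τ` of the
parts and monotone surjections `f i : Fin (n (τ i)) → Fin (l i)` so that any two classes
in distinct parts are joined by an edge. -/
def ContainsMultiIntervalMinor (t : ℕ) (n l : Fin t → ℕ)
    (E : ∀ i j : Fin t, Fin (n i) → Fin (n j) → Prop) : Prop :=
  ∃ τ : Equiv.Perm (Fin t), ∃ f : ∀ i : Fin t, Fin (n (τ i)) → Fin (l i),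
    (∀ i, Monotone (f i) ∧ Function.Surjective (f i)) ∧
    ∀ i j : Fin t, i ≠ j → ∀ a : Fin (l i), ∀ b : Fin (l j),
      ∃ (u : Fin (n (τ i))) (v : Fin (n (τ j))),
        f i u = a ∧ f j v = b ∧ E (τ i) (τ j) u v

/-- `G` is `K_{l 0, …, l (t-1)}`-interval minor free. -/
def MultiIntervalMinorFree (t : ℕ) (n l : Fin t → ℕ)
    (E : ∀ i j : Fin t, Fin (n i) → Fin (n j) → Prop) : Prop :=
  ¬ ContainsMultiIntervalMinor t n l E

/-- The number of edges of an ordered `t`-partite graph. -/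
noncomputable def multiEdgeCount (t : ℕ) (n : Fin t → ℕ)
    (E : ∀ i j : Fin t, Fin (n i) → Fin (n j) → Prop) : ℕ :=
  ∑ i : Fin t, ∑ j : Fin t,
    if i < j then Set.ncard {x : Fin (n i) × Fin (n j) | E i j x.1 x.2} else 0

/-- The set of edge counts achieved by `K_{l 0, …, l (t-1)}`-interval minor free ordered
`t`-partite graphs with parts of sizes `n 0, …, n (t-1)`; its greatest element is
`m(n_1,…,n_t,ℓ_1,…,ℓ_t)`. -/
def multiExtremalSet (t : ℕ) (n l : Fin t → ℕ) : Set ℕ :=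
  {N | ∃ E : ∀ i j : Fin t, Fin (n i) → Fin (n j) → Prop,
    (∀ i j u v, E i j u v ↔ E j i v u) ∧
    MultiIntervalMinorFree t n l E ∧ multiEdgeCount t n E = N}

/-!
Take the complete ordered `t`-partite graph and, between the first two parts, delete the edges
joining the last `n₁ - ℓ₁ + 1` vertices of one part to the last `n₂ - ℓ₂ + 1` vertices of the
other. Since `nᵢ < ℓᵢ₊₁`, a monotone surjection from part `τ i` onto `ℓᵢ` classes forces
`τ i ≥ i`, so the permutation of any interval minor is the identity. The last class of the
first part and the last class of the second part then consist of deleted-tail vertices only,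
so they cannot be adjacent.
-/

open Finset

theorem Fin.val_apply_le_of_monotone_of_surjective {m n : ℕ} {f : Fin n → Fin m}
    (hf : Monotone f) (hs : Function.Surjective f) (u : Fin n) : (f u : ℕ) ≤ u := by
  simpa using card_le_card_of_surjOn f (s := Iio u) (t := Iio (f u))
    (by simpa using surjOn_Iio_of_monotone_surjective hf hs u)

theorem Equiv.Perm.eq_one_of_forall_le_apply {t : ℕ} (τ : Equiv.Perm (Fin t))
    (h : ∀ i, i ≤ τ i) : τ = 1 := by
  have hval := (sum_eq_sum_iff_of_le (s := univ) (f := fun i : Fin t => (i : ℕ))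
    (g := fun i => (τ i : ℕ)) fun i _ => h i).1 (Equiv.sum_comp τ (fun i => (i : ℕ))).symm
  ext i
  exact (hval i (mem_univ i)).symm

theorem Fintype.sum_add_apply_eq_of_eq_off {ι M : Type*} [Fintype ι] [DecidableEq ι]
    [AddCommMonoid M] {f g : ι → M} (a : ι) (h : ∀ i ≠ a, f i = g i) :
    ∑ i, f i + g a = ∑ i, g i + f a := by
  rw [Fintype.sum_eq_add_sum_compl a f, Fintype.sum_eq_add_sum_compl a g,
    Finset.sum_congr rfl fun i hi => h i (by simpa using hi)]
  abel

theorem Fin.ncard_setOf_val_lt_or_val_lt (a b p q : ℕ) (hp : p ≤ a) (hq : q ≤ b) :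
    {x : Fin a × Fin b | (x.1 : ℕ) < p ∨ (x.2 : ℕ) < q}.ncard = p * b + (a - p) * q := by
  classical
  have row (u : Fin a) :
      #{v : Fin b | (u : ℕ) < p ∨ (v : ℕ) < q} = if (u : ℕ) < p then b else q := by
    split_ifs with hu <;> simp [hu, Fin.card_filter_val_lt, hq]
  have rows : #{u : Fin a | ¬ (u : ℕ) < p} = a - p := by
    rw [filter_not, card_sdiff_of_subset (filter_subset _ _)]
    simp [Fin.card_filter_val_lt, hp]
  rw [Set.ncard_eq_toFinset_card', Set.toFinset_ofPred, ← univ_product_univ, card_filter,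
    sum_product, sum_congr rfl fun u _ => by rw [← card_filter, row u], sum_ite, Finset.sum_const,
    Finset.sum_const, rows, Fin.card_filter_val_lt, min_eq_right hp, smul_eq_mul, smul_eq_mul]

/-- The tail of part `i` consists of the vertices `u` with `l i ≤ u + 1`: by
`Fin.val_apply_le_of_monotone_of_surjective`, these are the only ones a monotone surjection onto
`Fin (l i)` can send to the last class. -/
def completeMinusTails (t : ℕ) (n l : Fin t → ℕ) (p q : Fin t) :
    ∀ i j : Fin t, Fin (n i) → Fin (n j) → Prop :=
  fun i j u v => i ≠ j ∧ ¬ ((i = p ∨ i = q) ∧ l i ≤ u + 1 ∧ (j = p ∨ j = q) ∧ l j ≤ v + 1)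

section CompleteMinusTails

variable {t : ℕ} {n l : Fin t → ℕ} {p q : Fin t}

theorem completeMinusTails_comm (i j : Fin t) (u : Fin (n i)) (v : Fin (n j)) :
    completeMinusTails t n l p q i j u v ↔ completeMinusTails t n l p q j i v u := by
  unfold completeMinusTails
  rw [ne_comm]
  tauto

theorem perm_eq_one_of_forall_le_comp (hn : Monotone n)
    (hnl : ∀ i j : Fin t, (i : ℕ) + 1 = (j : ℕ) → n i < l j) (τ : Equiv.Perm (Fin t))
    (hτ : ∀ i, l i ≤ n (τ i)) : τ = 1 := by
  refine τ.eq_one_of_forall_le_apply fun i => not_lt.1 fun hlt => ?_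
  have hi : (i : ℕ) - 1 < t := by omega
  have hprev : n (τ i) ≤ n ⟨i - 1, hi⟩ := hn (Fin.le_def.2 (show (τ i : ℕ) ≤ i - 1 by omega))
  have := hnl ⟨i - 1, hi⟩ i (show (i : ℕ) - 1 + 1 = i by omega)
  have := hτ i
  omega

theorem multiIntervalMinorFree_completeMinusTails (hn : Monotone n)
    (hnl : ∀ i j : Fin t, (i : ℕ) + 1 = (j : ℕ) → n i < l j) (hpq : p ≠ q)
    (hp : 0 < l p) (hq : 0 < l q) :
    MultiIntervalMinorFree t n l (completeMinusTails t n l p q) := by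
  rintro ⟨τ, f, hf, hadj⟩
  obtain rfl : τ = 1 := perm_eq_one_of_forall_le_comp hn hnl τ fun i => by
    simpa using Fintype.card_le_of_surjective (f i) (hf i).2
  obtain ⟨u, v, hu, hv, huv⟩ := hadj p q hpq ⟨l p - 1, by omega⟩ ⟨l q - 1, by omega⟩
  have hu' : l p - 1 ≤ (u : ℕ) := by
    simpa [hu] using Fin.val_apply_le_of_monotone_of_surjective (hf p).1 (hf p).2 u
  have hv' : l q - 1 ≤ (v : ℕ) := by
    simpa [hv] using Fin.val_apply_le_of_monotone_of_surjective (hf q).1 (hf q).2 v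
  exact huv.2 ⟨.inl rfl, show l p ≤ u + 1 by omega, .inr rfl, show l q ≤ v + 1 by omega⟩

theorem ncard_completeMinusTails_of_ne {i j : Fin t} (hij : i < j) (hpq : p < q)
    (hne : (i, j) ≠ (p, q)) :
    {x : Fin (n i) × Fin (n j) | completeMinusTails t n l p q i j x.1 x.2}.ncard = n i * n j := by
  have hfull : {x : Fin (n i) × Fin (n j) | completeMinusTails t n l p q i j x.1 x.2} =
      Set.univ := by
    refine Set.eq_univ_of_forall fun x => ⟨hij.ne, ?_⟩
    rintro ⟨hi | rfl, -, hj | rfl, -⟩ <;> subst_vars <;> simp_all [lt_asymm hpq]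
  simp [hfull]

theorem setOf_completeMinusTails_self (hpq : p ≠ q) :
    {x : Fin (n p) × Fin (n q) | completeMinusTails t n l p q p q x.1 x.2} =
      {x | (x.1 : ℕ) < l p - 1 ∨ (x.2 : ℕ) < l q - 1} := by
  ext x
  simp only [completeMinusTails, Set.mem_ofPred_eq, true_or, or_true, true_and, ne_eq, hpq,
    not_false_eq_true]
  omega

theorem multiEdgeCount_completeMinusTails (hpq : p < q) (hp : l p ≤ n p) (hq : l q ≤ n q) :
    multiEdgeCount t n (completeMinusTails t n l p q) =
      (∑ i : Fin t, ∑ j : Fin t, if i < j then n i * n j else 0) - n p * n q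
        + (l p - 1) * n q + (n p - (l p - 1)) * (l q - 1) := by
  classical
  let F : Fin t × Fin t → ℕ := fun x => if x.1 < x.2 then
    {y : Fin (n x.1) × Fin (n x.2) | completeMinusTails t n l p q x.1 x.2 y.1 y.2}.ncard else 0
  let G : Fin t × Fin t → ℕ := fun x => if x.1 < x.2 then n x.1 * n x.2 else 0
  have hFG : ∀ x ≠ (p, q), F x = G x := fun x hx => by
    by_cases hx' : x.1 < x.2
    · simp only [F, G, if_pos hx', ncard_completeMinusTails_of_ne hx' hpq hx]
    · simp only [F, G, if_neg hx']
  have hF : F (p, q) = (l p - 1) * n q + (n p - (l p - 1)) * (l q - 1) := by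
    simp only [F, if_pos hpq, setOf_completeMinusTails_self hpq.ne]
    exact Fin.ncard_setOf_val_lt_or_val_lt _ _ _ _ (by omega) (by omega)
  have hG : G (p, q) = n p * n q := if_pos hpq
  have hG_le : G (p, q) ≤ ∑ x, G x := single_le_sum (fun x _ => Nat.zero_le (G x)) (mem_univ _)
  have hcount := Fintype.sum_add_apply_eq_of_eq_off (p, q) hFG
  have hFsum : ∑ x, F x = multiEdgeCount t n (completeMinusTails t n l p q) :=
    Fintype.sum_prod_type F
  have hGsum : ∑ x, G x = ∑ i : Fin t, ∑ j : Fin t, if i < j then n i * n j else 0 :=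
    Fintype.sum_prod_type G
  omega

end CompleteMinusTails

theorem stmt11 (t : ℕ) (ht : 2 ≤ t) (n l : Fin t → ℕ)
    (hn : StrictMono n)
    (hlpos : ∀ i, 0 < l i) (hln : ∀ i, l i ≤ n i)
    (hnl : ∀ i j : Fin t, (i : ℕ) + 1 = (j : ℕ) → n i < l j) :
    ∃ N ∈ multiExtremalSet t n l,
      (∑ i : Fin t, ∑ j : Fin t, if i < j then n i * n j else 0)
        - n ⟨0, by omega⟩ * n ⟨1, by omega⟩
        + (l ⟨0, by omega⟩ - 1) * n ⟨1, by omega⟩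
        + (n ⟨0, by omega⟩ - l ⟨0, by omega⟩ + 1) * (l ⟨1, by omega⟩ - 1) ≤ N := by
  set p : Fin t := ⟨0, by omega⟩
  set q : Fin t := ⟨1, by omega⟩
  have hpq : p < q := Fin.mk_lt_mk.2 Nat.zero_lt_one
  refine ⟨_, ⟨completeMinusTails t n l p q, completeMinusTails_comm,
    multiIntervalMinorFree_completeMinusTails hn.monotone hnl hpq.ne (hlpos p) (hlpos q), rfl⟩,
    ?_⟩
  rw [multiEdgeCount_completeMinusTails hpq (hln p) (hln q)]
  have := hlpos p
  have := hln p
  rw [show n p - l p + 1 = n p - (l p - 1) by omega]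
end
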